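/- Let (u_n) be a sequence of real numbers with inf_n u_n > 0 and let (ε_n) be a sequence of real numbers with ε_n → 0 and u_n ε_n → 0. Then there exist a constant C < ∞ and an index N such that for all n ≥ N, |Ψ(u_n + ε_n) − Ψ(u_n)| ≤ C·max(u_n, 1)·|ε_n|·Ψ(u_n). -/

import Mathlib

open MeasureTheory

/-- The standard normal density `φ(z) = (2π)^{-1/2} exp(−z²/2)`. -/
noncomputable def phi (x : ℝ) : ℝ := (Real.sqrt (2 * Real.pi))⁻¹ * Real.exp (-x ^ 2 / 2)

/-- The standard Gaussian survival function `Ψ(x) = ∫_x^∞ φ(z) dz`. -/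
noncomputable def Psi (x : ℝ) : ℝ := ∫ z in Set.Ioi x, phi z

/-!
Between `v` and `v + ε` the density varies by at most a factor `e` as long as `|v ε| ≤ 1`, so
`|Ψ(v + ε) − Ψ(v)| ≤ e φ(v) |ε|`. On the other hand, integrating `φ` over `[v, v + 1 / max(v, 1)]`,
where it is at least `e^{-3/2} φ(v)`, gives the Mills-ratio type lower bound
`φ(v) ≤ e^{3/2} max(v, 1) Ψ(v)`. Together they give the claim with `C = e^{5/2}` as soon as
`|u_n ε_n| ≤ 1`.
-/

open Real Set intervalIntegral
open scoped Interval

lemma phi_pos (x : ℝ) : 0 < phi x := by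
  unfold phi
  positivity

lemma integrable_phi : Integrable phi := by
  have h : phi = fun x => (√(2 * π))⁻¹ * exp (-(1 / 2) * x ^ 2) := by
    funext x
    unfold phi
    ring_nf
  rw [h]
  exact (integrable_exp_neg_mul_sq (by norm_num)).const_mul _

lemma phi_le_exp_mul_phi {s t c : ℝ} (h : t ^ 2 ≤ s ^ 2 + 2 * c) : phi s ≤ exp c * phi t := by
  unfold phi
  rw [mul_left_comm, ← exp_add]
  gcongr
  linarith

lemma phi_le_exp_one_mul_phi {v e t : ℝ} (hve : |v * e| ≤ 1) (ht : |t - v| ≤ |e|) :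
    phi t ≤ exp 1 * phi v := by
  refine phi_le_exp_mul_phi ?_
  have hvd : v * (v - t) ≤ 1 := by
    calc v * (v - t) ≤ |v| * |t - v| := by rw [← abs_sub_comm, ← abs_mul]; exact le_abs_self _
      _ ≤ |v| * |e| := by gcongr
      _ = |v * e| := (abs_mul v e).symm
      _ ≤ 1 := hve
  nlinarith [sq_nonneg (v - t)]

lemma Psi_nonneg (x : ℝ) : 0 ≤ Psi x :=
  setIntegral_nonneg measurableSet_Ioi fun t _ => (phi_pos t).le

lemma Psi_sub_Psi (a b : ℝ) : Psi a - Psi b = ∫ t in a..b, phi t :=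
  integral_Ioi_sub_Ioi' integrable_phi.integrableOn integrable_phi.integrableOn

lemma abs_Psi_sub_Psi_le {a b M : ℝ} (hM : ∀ t ∈ Ι a b, phi t ≤ M) :
    |Psi a - Psi b| ≤ M * |b - a| := by
  rw [Psi_sub_Psi, ← Real.norm_eq_abs]
  exact norm_integral_le_of_norm_le_const fun t ht => by
    rw [norm_of_nonneg (phi_pos t).le]
    exact hM t ht

lemma mul_le_Psi {a b m : ℝ} (hab : a ≤ b) (hm : ∀ t ∈ Icc a b, m ≤ phi t) :
    (b - a) * m ≤ Psi a :=
  calc (b - a) * m = ∫ _ in a..b, m := by simp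
    _ ≤ ∫ t in a..b, phi t :=
      integral_mono_on hab intervalIntegrable_const integrable_phi.intervalIntegrable hm
    _ = Psi a - Psi b := (Psi_sub_Psi a b).symm
    _ ≤ Psi a := sub_le_self _ (Psi_nonneg b)

lemma phi_le_exp_mul_max_mul_Psi (v : ℝ) : phi v ≤ exp (3 / 2) * max v 1 * Psi v := by
  set m := max v 1
  have hm : 1 ≤ m := le_max_right v 1
  have hm0 : 0 < m := one_pos.trans_le hm
  have hvm : v * m⁻¹ ≤ 1 := by
    rw [← div_eq_mul_inv, div_le_one hm0]
    exact le_max_left v 1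
  have hm1 : m⁻¹ ≤ 1 := inv_le_one_of_one_le₀ hm
  have hlow : (v + m⁻¹ - v) * (exp (-(3 / 2)) * phi v) ≤ Psi v := by
    refine mul_le_Psi (by simp [hm0.le]) fun t ⟨hvt, htv⟩ => ?_
    have hsq : t ^ 2 ≤ v ^ 2 + 2 * (3 / 2) := by
      rcases le_total 0 v with hv | hv
      · nlinarith [mul_nonneg hv (sub_nonneg.2 htv)]
      · nlinarith [mul_nonneg_of_nonpos_of_nonpos hv (sub_nonpos.2 hvt)]
    calc exp (-(3 / 2)) * phi v ≤ exp (-(3 / 2)) * (exp (3 / 2) * phi t) := by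
          gcongr
          exact phi_le_exp_mul_phi hsq
      _ = phi t := by rw [← mul_assoc, ← exp_add]; simp
  rw [add_sub_cancel_left, exp_neg] at hlow
  calc phi v = exp (3 / 2) * m * (m⁻¹ * ((exp (3 / 2))⁻¹ * phi v)) := by field_simp
    _ ≤ exp (3 / 2) * m * Psi v := by gcongr

lemma abs_Psi_add_sub_Psi_le {v e : ℝ} (hve : |v * e| ≤ 1) :
    |Psi (v + e) - Psi v| ≤ exp (5 / 2) * max v 1 * |e| * Psi v := by
  have hlocal : |Psi (v + e) - Psi v| ≤ exp 1 * phi v * |e| := by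
    simpa using abs_Psi_sub_Psi_le (a := v + e) (b := v) fun t ht =>
      phi_le_exp_one_mul_phi hve <| (abs_sub_left_of_mem_uIcc <| uIoc_subset_uIcc <|
        uIoc_comm (v + e) v ▸ ht).trans_eq (by rw [add_sub_cancel_left])
  calc |Psi (v + e) - Psi v| ≤ exp 1 * phi v * |e| := hlocal
    _ ≤ exp 1 * (exp (3 / 2) * max v 1 * Psi v) * |e| := by
      gcongr
      exact phi_le_exp_mul_max_mul_Psi v
    _ = exp (5 / 2) * max v 1 * |e| * Psi v := by
      rw [show (5 / 2 : ℝ) = 1 + 3 / 2 by norm_num, exp_add]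
      ring

theorem stmt1_general (u ε : ℕ → ℝ)
    (huε : Filter.Tendsto (fun n => u n * ε n) Filter.atTop (nhds 0)) :
    ∃ C : ℝ, ∃ N : ℕ, ∀ n ≥ N,
      |Psi (u n + ε n) - Psi (u n)| ≤ C * max (u n) 1 * |ε n| * Psi (u n) := by
  obtain ⟨N, hN⟩ := Filter.eventually_atTop.1 <|
    (huε.abs.eventually (ge_mem_nhds (by simp : |(0 : ℝ)| < 1)))
  exact ⟨exp (5 / 2), N, fun n hn => abs_Psi_add_sub_Psi_le (hN n hn)⟩

/-- perturbation bound for the Gaussian survival function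
when `u_n ε_n → 0`. -/
theorem stmt1 (u ε : ℕ → ℝ) (hu : 0 < ⨅ n, u n)
    (hε : Filter.Tendsto ε Filter.atTop (nhds 0))
    (huε : Filter.Tendsto (fun n => u n * ε n) Filter.atTop (nhds 0)) :
    ∃ C : ℝ, ∃ N : ℕ, ∀ n ≥ N,
      |Psi (u n + ε n) - Psi (u n)| ≤ C * max (u n) 1 * |ε n| * Psi (u n) :=
  stmt1_general u ε huε
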